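/- Consider the n-dimensional real Jordan algebra A with basis e_1, ..., e_n and multiplication e_1e_1 = e_1, e_1e_j = e_j for 2 ≤ j ≤ n, and e_ie_j = 0 otherwise (symmetrized). With the inner product making {e_i} orthonormal, the Jordan Ricci tensor of (A, ⟨·,·⟩) vanishes identically: Ric = 0, where Ric(X,Y) = −½Σ_{i,j}⟨XE_i,E_j⟩⟨YE_i,E_j⟩ + ¼Σ_{i,j}⟨E_iE_j,X⟩⟨E_iE_j,Y⟩ + ½B(X,Y) − ¼⟨H,XY⟩, B is the Killing form B(X,Y) = Tr L_X L_Y, and H = Σ_i E_i². -/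

import Mathlib

/-!
The hypotheses say that `A = ℝ e ⊕ e⊥` with `e = e₁` the unit and `e⊥` squaring to zero, i.e.
`X U = ⟪U, e⟫ X + ⟪X, e⟫ U - ⟪X, e⟫ ⟪U, e⟫ e`. With `x = ⟪X, e⟫`, `y = ⟪Y, e⟫`, Parseval's identity
evaluates the four terms of the Ricci tensor as `⟪X, Y⟫ + (n - 1) x y`, `2 ⟪X, Y⟫ - x y`, `n x y`
and `x y` (since `H = e`), and `-½ (⟪X, Y⟫ + (n - 1) x y) + ¼ (2 ⟪X, Y⟫ - x y) + ½ n x y - ¼ x y = 0`.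
-/

open RealInnerProductSpace

namespace OrthonormalBasis

variable {ι V : Type*} [Fintype ι] [NormedAddCommGroup V] [InnerProductSpace ℝ V]

theorem sum_inner_mul_inner_real (b : OrthonormalBasis ι ℝ V) (u v : V) :
    ∑ i, ⟪u, b i⟫ * ⟪v, b i⟫ = ⟪u, v⟫ := by
  simpa only [real_inner_comm (b _) v] using b.sum_inner_mul_inner u v

theorem sum_compl_inner_mul_inner [DecidableEq ι] (b : OrthonormalBasis ι ℝ V) (z : ι)
    (u v : V) : ∑ i ∈ {z}ᶜ, ⟪u, b i⟫ * ⟪v, b i⟫ = ⟪u, v⟫ - ⟪u, b z⟫ * ⟪v, b z⟫ := by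
  rw [← b.sum_inner_mul_inner_real u v, Fintype.sum_eq_add_sum_compl z]
  ring

end OrthonormalBasis

section SqZeroExt

variable {V : Type*} [NormedAddCommGroup V] [InnerProductSpace ℝ V]

/-- With `⟪e, e⟫ = 1` this is the product of the trivial square-zero extension `ℝ e ⊕ e⊥`. -/
def sqZeroExtMul (e : V) : V →ₗ[ℝ] V →ₗ[ℝ] V :=
  LinearMap.mk₂ ℝ (fun X U => ⟪U, e⟫ • X + ⟪X, e⟫ • U - (⟪X, e⟫ * ⟪U, e⟫) • e)
    (fun X X' U => by simp only [inner_add_left, add_smul, add_mul, smul_add]; abel)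
    (fun c X U => by simp only [real_inner_smul_left, smul_add, smul_sub, smul_smul]; ring_nf)
    (fun X U U' => by simp only [inner_add_left, add_smul, mul_add, smul_add]; abel)
    (fun c U X => by simp only [real_inner_smul_left, smul_add, smul_sub, smul_smul]; ring_nf)

variable {e : V}

theorem sqZeroExtMul_apply (X U : V) :
    sqZeroExtMul e X U = ⟪U, e⟫ • X + ⟪X, e⟫ • U - (⟪X, e⟫ * ⟪U, e⟫) • e :=
  rfl

theorem sqZeroExtMul_unit_left (he : ⟪e, e⟫ = 1) (U : V) : sqZeroExtMul e e U = U := by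
  rw [sqZeroExtMul_apply, he, one_smul, one_mul, real_inner_comm]
  abel

theorem sqZeroExtMul_unit_right (he : ⟪e, e⟫ = 1) (X : V) : sqZeroExtMul e X e = X := by
  rw [sqZeroExtMul_apply, he, one_smul, mul_one]
  abel

theorem sqZeroExtMul_of_inner_eq_zero_left {u : V} (hu : ⟪u, e⟫ = 0) (U : V) :
    sqZeroExtMul e u U = ⟪U, e⟫ • u := by
  simp [sqZeroExtMul_apply, hu]

theorem sqZeroExtMul_of_inner_eq_zero_right {u : V} (hu : ⟪u, e⟫ = 0) (X : V) :
    sqZeroExtMul e X u = ⟪X, e⟫ • u := by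
  simp [sqZeroExtMul_apply, hu]

theorem inner_unit_sqZeroExtMul (he : ⟪e, e⟫ = 1) (X Y : V) :
    ⟪e, sqZeroExtMul e X Y⟫ = ⟪X, e⟫ * ⟪Y, e⟫ := by
  simp only [sqZeroExtMul_apply, inner_sub_right, inner_add_right, real_inner_smul_right, he,
    real_inner_comm e]
  ring

end SqZeroExt

namespace OrthonormalBasis

variable {ι V : Type*} [Fintype ι] [NormedAddCommGroup V] [InnerProductSpace ℝ V]
  (b : OrthonormalBasis ι ℝ V) (z : ι)

theorem eq_sqZeroExtMul (mul : V →ₗ[ℝ] V →ₗ[ℝ] V) (h1 : ∀ j, mul (b z) (b j) = b j)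
    (h2 : ∀ j, mul (b j) (b z) = b j) (h3 : ∀ i j, i ≠ z → j ≠ z → mul (b i) (b j) = 0) :
    mul = sqZeroExtMul (b z) := by
  refine LinearMap.ext_basis b.toBasis b.toBasis fun i j => ?_
  simp only [OrthonormalBasis.coe_toBasis]
  by_cases hj : j = z
  · subst hj
    rw [h2, sqZeroExtMul_unit_right (b.inner_eq_one j)]
  rw [sqZeroExtMul_of_inner_eq_zero_right (b.inner_eq_zero hj)]
  by_cases hi : i = z
  · subst hi
    rw [h1, b.inner_eq_one, one_smul]
  · rw [h3 i j hi hj, b.inner_eq_zero hi, zero_smul]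

theorem sum_sum_inner_sqZeroExtMul_apply_mul [DecidableEq ι] (X Y : V) :
    ∑ i, ∑ j, ⟪sqZeroExtMul (b z) X (b i), b j⟫ * ⟪sqZeroExtMul (b z) Y (b i), b j⟫
      = ⟪X, Y⟫ + (Fintype.card ι - 1) * (⟪X, b z⟫ * ⟪Y, b z⟫) := by
  simp only [b.sum_inner_mul_inner_real]
  have hcompl : ∀ i ∈ ({z}ᶜ : Finset ι),
      ⟪sqZeroExtMul (b z) X (b i), sqZeroExtMul (b z) Y (b i)⟫ = ⟪X, b z⟫ * ⟪Y, b z⟫ := by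
    intro i hi
    have hiz : ⟪b i, b z⟫ = 0 := b.inner_eq_zero (by simpa using hi)
    rw [sqZeroExtMul_of_inner_eq_zero_right hiz, sqZeroExtMul_of_inner_eq_zero_right hiz,
      real_inner_smul_left, real_inner_smul_right, b.inner_eq_one, mul_one]
  rw [Fintype.sum_eq_add_sum_compl z, Finset.sum_congr rfl hcompl, Finset.sum_const,
    Finset.card_compl, Finset.card_singleton, nsmul_eq_mul,
    Nat.cast_sub (Fintype.card_pos_iff.2 ⟨z⟩), sqZeroExtMul_unit_right (b.inner_eq_one z),
    sqZeroExtMul_unit_right (b.inner_eq_one z)]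
  push_cast
  ring

theorem sum_sum_inner_sqZeroExtMul_mul [DecidableEq ι] (X Y : V) :
    ∑ i, ∑ j, ⟪sqZeroExtMul (b z) (b i) (b j), X⟫ * ⟪sqZeroExtMul (b z) (b i) (b j), Y⟫
      = 2 * ⟪X, Y⟫ - ⟪X, b z⟫ * ⟪Y, b z⟫ := by
  have hcompl : ∀ i ∈ ({z}ᶜ : Finset ι),
      ∑ j, ⟪sqZeroExtMul (b z) (b i) (b j), X⟫ * ⟪sqZeroExtMul (b z) (b i) (b j), Y⟫
        = ⟪X, b i⟫ * ⟪Y, b i⟫ := by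
    intro i hi
    simp only [sqZeroExtMul_of_inner_eq_zero_left (b.inner_eq_zero (by simpa using hi) :
      ⟪b i, b z⟫ = 0), real_inner_smul_left]
    calc _ = (∑ j, ⟪b z, b j⟫ * ⟪b z, b j⟫) * (⟪X, b i⟫ * ⟪Y, b i⟫) := by
          rw [Finset.sum_mul]
          refine Finset.sum_congr rfl fun j _ => ?_
          rw [real_inner_comm (b z), real_inner_comm X, real_inner_comm Y]
          ring
      _ = _ := by rw [b.sum_inner_mul_inner_real, b.inner_eq_one, one_mul]
  have hz : ∑ j, ⟪sqZeroExtMul (b z) (b z) (b j), X⟫ * ⟪sqZeroExtMul (b z) (b z) (b j), Y⟫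
      = ⟪X, Y⟫ := by
    rw [← b.sum_inner_mul_inner X Y]
    refine Finset.sum_congr rfl fun j _ => ?_
    rw [sqZeroExtMul_unit_left (b.inner_eq_one z), real_inner_comm X]
  rw [Fintype.sum_eq_add_sum_compl z, Finset.sum_congr rfl hcompl,
    b.sum_compl_inner_mul_inner, hz]
  ring

theorem trace_sqZeroExtMul_comp (X Y : V) :
    LinearMap.trace ℝ V (sqZeroExtMul (b z) X ∘ₗ sqZeroExtMul (b z) Y)
      = Fintype.card ι * (⟪X, b z⟫ * ⟪Y, b z⟫) := by
  have hdiag : ∀ i, ⟪b i, sqZeroExtMul (b z) X (sqZeroExtMul (b z) Y (b i))⟫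
      = ⟪X, b z⟫ * ⟪Y, b z⟫ := by
    intro i
    by_cases hi : i = z
    · subst hi
      rw [sqZeroExtMul_unit_right (b.inner_eq_one i),
        inner_unit_sqZeroExtMul (b.inner_eq_one i)]
    · have hiz : ⟪b i, b z⟫ = 0 := b.inner_eq_zero hi
      rw [sqZeroExtMul_of_inner_eq_zero_right hiz, map_smul,
        sqZeroExtMul_of_inner_eq_zero_right hiz, real_inner_smul_right,
        real_inner_smul_right, b.inner_eq_one]
      ring
  simp only [LinearMap.trace_eq_sum_inner _ b, LinearMap.comp_apply, hdiag, Finset.sum_const,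
    Finset.card_univ, nsmul_eq_mul]

theorem sum_sqZeroExtMul_self [DecidableEq ι] :
    ∑ i, sqZeroExtMul (b z) (b i) (b i) = b z := by
  rw [Fintype.sum_eq_add_sum_compl z, sqZeroExtMul_unit_right (b.inner_eq_one z),
    add_eq_left]
  refine Finset.sum_eq_zero fun i hi => ?_
  have hiz : ⟪b i, b z⟫ = 0 := b.inner_eq_zero (by simpa using hi)
  rw [sqZeroExtMul_of_inner_eq_zero_right hiz, hiz, zero_smul]

end OrthonormalBasis

theorem example_flat_einstein
    {V : Type*} [NormedAddCommGroup V] [InnerProductSpace ℝ V]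
    {n : ℕ} (hn : 0 < n)
    (b : OrthonormalBasis (Fin n) ℝ V)
    (mul : V →ₗ[ℝ] V →ₗ[ℝ] V)
    (h1 : ∀ j : Fin n, mul (b ⟨0, hn⟩) (b j) = b j)
    (h2 : ∀ j : Fin n, mul (b j) (b ⟨0, hn⟩) = b j)
    (h3 : ∀ i j : Fin n, i ≠ ⟨0, hn⟩ → j ≠ ⟨0, hn⟩ → mul (b i) (b j) = 0) :
    ∀ X Y : V,
      -(1/2) * ∑ i, ∑ j, ⟪mul X (b i), b j⟫ * ⟪mul Y (b i), b j⟫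
      + (1/4) * ∑ i, ∑ j, ⟪mul (b i) (b j), X⟫ * ⟪mul (b i) (b j), Y⟫
      + (1/2) * LinearMap.trace ℝ V (mul X ∘ₗ mul Y)
      - (1/4) * ⟪∑ i, mul (b i) (b i), mul X Y⟫ = 0 := by
  intro X Y
  obtain rfl := b.eq_sqZeroExtMul _ mul h1 h2 h3
  rw [b.sum_sum_inner_sqZeroExtMul_apply_mul, b.sum_sum_inner_sqZeroExtMul_mul,
    b.trace_sqZeroExtMul_comp, b.sum_sqZeroExtMul_self,
    inner_unit_sqZeroExtMul (b.inner_eq_one _), Fintype.card_fin]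
  ring
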